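/- Let K ≥ 1 be an integer and 0 < β < 1 with Kβ > 1, and let c : ℤ → ℝ be an even sequence satisfying c(n) = 0 for |n| > K, |c(n)·n| ≤ A for all n (for an absolute constant A), and ∑_{n ≥ 1} n·c(n)² = (1/(2π²)) log(Kβ) + O(1). Assume the prime number theorem for k: #{v ∈ 𝒮_k : deg v = n} = q^n/n + O(q^{n/2}). Then ∑_{v ∈ 𝒮_k} c(deg v)² (deg v)² |v|^{−1} = (1/(2π²)) log(Kβ) + O(1), with implied constants independent of K and β. -/

import Mathlib

open scoped BigOperators
open Filter

/-- Abstract data of a function field `k` in one variable with exact field of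
constants `𝔽_q`: the set of places with their degrees, the genus and the class
number. -/
structure FunctionFieldData where
  q : ℕ
  two_le_q : 2 ≤ q
  Place : Type
  degPlace : Place → ℕ
  degPlace_pos : ∀ v, 0 < degPlace v
  genus : ℕ
  classNumber : ℕ
  classNumber_pos : 0 < classNumber

namespace FunctionFieldData
/-- The absolute norm `|v| = q ^ deg v` of a place. -/
noncomputable def absNorm (k : FunctionFieldData) (v : k.Place) : ℝ :=
  (k.q : ℝ) ^ k.degPlace v
end FunctionFieldData

/-!
Grouping the places by degree turns the sum into `∑_{n ≤ K} N_n c(n)² n² q⁻ⁿ`, where `N_n` is the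
number of places of degree `n`. Replacing `N_n` by `qⁿ/n` gives exactly `∑ n c(n)²`, and since
`c(n)² n² ≤ A²`, the prime number theorem bounds the `n`-th error term by `A² P q^{-n/2}`, whose sum
over `n` is at most `4 A² P` because `q ≥ 2`.
-/

open Finset

theorem tsum_comp_eq_tsum_card_fiber_mul {α : Type*} (d : α → ℕ)
    (hd : ∀ n, Finite {a // d a = n}) {G : ℕ → ℝ} (hG : (Function.support G).Finite) :
    ∑' a, G (d a) = ∑' n, Nat.card {a // d a = n} * G n := by
  have hsum : Summable (G ∘ d) := by
    refine summable_of_hasFiniteSupport ?_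
    show (Function.support (G ∘ d)).Finite
    rw [Function.support_comp_eq_preimage]
    exact hG.preimage' fun n _ => Set.finite_coe_iff.mp (hd n)
  refine (hsum.hasSum.tsum_fiberwise d).tsum_eq.symm.trans (tsum_congr fun n => ?_)
  calc ∑' a : d ⁻¹' {n}, G (d a) = ∑' _ : {a // d a = n}, G n :=
        tsum_congr fun a => congrArg G a.2
    _ = _ := by rw [tsum_const, nsmul_eq_mul]

theorem sum_range_inv_sqrt_pow_le_four {q : ℝ} (hq : 2 ≤ q) (m : ℕ) :
    ∑ n ∈ range m, (√q)⁻¹ ^ n ≤ 4 := by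
  have hsqrt : 4 / 3 ≤ √q := Real.le_sqrt_of_sq_le (by linarith)
  have hr : (√q)⁻¹ ≤ 3 / 4 := by
    rw [inv_le_comm₀ (by linarith) (by norm_num)]
    linarith
  calc ∑ n ∈ range m, (√q)⁻¹ ^ n ≤ (√q)⁻¹ ^ 0 / (1 - (√q)⁻¹) := by
        rw [range_eq_Ico]
        exact geom_sum_Ico_le_of_lt_one (by positivity) (by linarith)
    _ ≤ 1 / (1 - 3 / 4) := by rw [pow_zero]; gcongr
    _ = 4 := by norm_num

theorem rpow_half_div_pow {q : ℝ} (hq : 0 < q) (n : ℕ) :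
    q ^ ((n : ℝ) / 2) / q ^ n = (√q)⁻¹ ^ n := by
  have hsqrt : q ^ ((n : ℝ) / 2) = √q ^ n := by
    rw [Real.sqrt_eq_rpow, ← Real.rpow_natCast, ← Real.rpow_mul hq.le]
    ring_nf
  have hpow : q ^ n = √q ^ n * √q ^ n := by
    rw [← mul_pow, Real.mul_self_sqrt hq.le]
  rw [hsqrt, hpow, div_mul_cancel_left₀ (by positivity), inv_pow]

theorem abs_mul_div_pow_sub_div_le {q N x P A : ℝ} (hq : 0 < q) {n : ℕ} (hn : 1 ≤ n)
    (hN : |N - q ^ n / n| ≤ P * q ^ ((n : ℝ) / 2)) (hx0 : 0 ≤ x) (hxA : x ≤ A) :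
    |N * x / q ^ n - x / n| ≤ A * P * (√q)⁻¹ ^ n := by
  have hqn : 0 < q ^ n := by positivity
  have hP : 0 ≤ P * q ^ ((n : ℝ) / 2) := (abs_nonneg _).trans hN
  have hsplit : N * x / q ^ n - x / n = (N - q ^ n / n) * (x / q ^ n) := by
    have : (n : ℝ) ≠ 0 := by positivity
    field_simp
  calc |N * x / q ^ n - x / n| = |N - q ^ n / n| * (x / q ^ n) := by
        rw [hsplit, abs_mul, abs_of_nonneg (div_nonneg hx0 hqn.le)]
    _ ≤ P * q ^ ((n : ℝ) / 2) * (A / q ^ n) := by gcongr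
    _ = A * P * (√q)⁻¹ ^ n := by rw [← rpow_half_div_pow hq]; ring

theorem abs_sum_mul_div_pow_sub_sum_div_le {q P A : ℝ} (hq : 2 ≤ q) (hP : 0 ≤ P) {N x : ℕ → ℝ}
    (hN : ∀ n : ℕ, 1 ≤ n → |N n - q ^ n / n| ≤ P * q ^ ((n : ℝ) / 2))
    (hx : ∀ n, 0 ≤ x n ∧ x n ≤ A) (hx0 : x 0 = 0) (m : ℕ) :
    |∑ n ∈ range m, N n * x n / q ^ n - ∑ n ∈ range m, x n / n| ≤ 4 * A * P := by
  have hA : 0 ≤ A := (hx 0).1.trans (hx 0).2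
  have hterm (n : ℕ) : |N n * x n / q ^ n - x n / n| ≤ A * P * (√q)⁻¹ ^ n := by
    rcases Nat.eq_zero_or_pos n with rfl | hn
    · simp only [hx0, mul_zero, zero_div, sub_zero, abs_zero, pow_zero, mul_one]
      positivity
    · exact abs_mul_div_pow_sub_div_le (by linarith) hn (hN n hn) (hx n).1 (hx n).2
  calc |∑ n ∈ range m, N n * x n / q ^ n - ∑ n ∈ range m, x n / n|
      ≤ ∑ n ∈ range m, |N n * x n / q ^ n - x n / n| := by
        rw [← sum_sub_distrib]; exact abs_sum_le_sum_abs _ _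
    _ ≤ ∑ n ∈ range m, A * P * (√q)⁻¹ ^ n := sum_le_sum fun n _ => hterm n
    _ = A * P * ∑ n ∈ range m, (√q)⁻¹ ^ n := by rw [mul_sum]
    _ ≤ A * P * 4 := by gcongr; exact sum_range_inv_sqrt_pow_le_four hq m
    _ = 4 * A * P := by ring

theorem statement14_general
    (k : FunctionFieldData)
    (hfin : ∀ n : ℕ, Finite {v : k.Place // k.degPlace v = n})
    (P : ℝ)
    (hPNT : ∀ n : ℕ, 1 ≤ n →
      |(Nat.card {v : k.Place // k.degPlace v = n} : ℝ) - (k.q : ℝ) ^ n / n| ≤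
        P * (k.q : ℝ) ^ ((n : ℝ) / 2))
    (A B : ℝ) (hB : 0 < B) :
    ∃ D : ℝ, 0 < D ∧
      ∀ (K : ℕ) (β : ℝ) (c : ℤ → ℝ),
        1 ≤ K → 0 < β → β < 1 → 1 < (K : ℝ) * β →
        (∀ n : ℤ, c (-n) = c n) →
        (∀ n : ℤ, (K : ℤ) < |n| → c n = 0) →
        (∀ n : ℤ, |c n * n| ≤ A) →
        |(∑' n : ℕ, (n : ℝ) * (c n) ^ 2) - Real.log ((K : ℝ) * β) / (2 * Real.pi ^ 2)| ≤ B →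
        |(∑' v : k.Place, (c (k.degPlace v)) ^ 2 * (k.degPlace v : ℝ) ^ 2 / k.absNorm v) -
            Real.log ((K : ℝ) * β) / (2 * Real.pi ^ 2)| ≤ D := by
  have hq : (2 : ℝ) ≤ k.q := by exact_mod_cast k.two_le_q
  have hP : 0 ≤ P :=
    nonneg_of_mul_nonneg_left ((abs_nonneg _).trans (hPNT 1 le_rfl)) (by positivity)
  refine ⟨B + 4 * A ^ 2 * P, by positivity, ?_⟩
  intro K β c _ _ _ _ _ hvan hbd hmain
  have hc (n : ℕ) (hn : n ∉ range (K + 1)) : c n = 0 :=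
    hvan n (by rw [mem_range, not_lt] at hn; rw [Nat.abs_cast]; exact_mod_cast hn)
  have hplaces : ∑' v, c (k.degPlace v) ^ 2 * (k.degPlace v : ℝ) ^ 2 / k.absNorm v
      = ∑ n ∈ range (K + 1),
          (Nat.card {v // k.degPlace v = n} : ℝ) * (c n * n) ^ 2 / (k.q : ℝ) ^ n := by
    simp only [FunctionFieldData.absNorm]
    rw [tsum_comp_eq_tsum_card_fiber_mul k.degPlace hfin
        (G := fun n => c n ^ 2 * (n : ℝ) ^ 2 / (k.q : ℝ) ^ n) ?_,
      tsum_eq_sum (s := range (K + 1)) fun n hn => by simp [hc n hn]]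
    · exact sum_congr rfl fun n _ => by ring
    · exact (range (K + 1)).finite_toSet.subset fun n hn =>
        by_contra fun h => hn (by simp [hc n h])
  have hline : ∑' n : ℕ, (n : ℝ) * c n ^ 2 = ∑ n ∈ range (K + 1), (c n * n) ^ 2 / n := by
    rw [tsum_eq_sum (s := range (K + 1)) fun n hn => by simp [hc n hn]]
    refine sum_congr rfl fun n _ => ?_
    rcases eq_or_ne (n : ℝ) 0 with hn | hn
    · simp [hn]
    · field_simp
  have hx (n : ℕ) : 0 ≤ (c n * n) ^ 2 ∧ (c n * n) ^ 2 ≤ A ^ 2 :=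
    ⟨sq_nonneg _, sq_le_sq' (abs_le.mp (hbd n)).1 (abs_le.mp (hbd n)).2⟩
  have herror := abs_sum_mul_div_pow_sub_sum_div_le hq hP hPNT hx (by simp) (K + 1)
  rw [hplaces]
  rw [hline] at hmain
  exact (abs_sub_le _ (∑ n ∈ range (K + 1), (c n * n) ^ 2 / n) _).trans (by linarith)

/-- let `K ≥ 1` and `0 < β < 1` with `Kβ > 1`, and let `c : ℤ → ℝ` be an
even sequence with `c(n) = 0` for `|n| > K`, `|c(n)·n| ≤ A` for all `n`, and
`∑_{n ≥ 1} n·c(n)² = (1/(2π²)) log(Kβ) + O(1)` (these model the Fourier coefficients of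
the degree-`K` Beurling–Selberg polynomials for `𝐈 = [−β/2, β/2]`).  Assuming the prime
number theorem for `k`, `#{v ∈ 𝒮_k : deg v = n} = q^n/n + O(q^{n/2})`, one has
`∑_{v ∈ 𝒮_k} c(deg v)² (deg v)² |v|^{−1} = (1/(2π²)) log(Kβ) + O(1)`, with implied
constants independent of `K` and `β`. -/
theorem statement14
    (k : FunctionFieldData)
    (hfin : ∀ n : ℕ, Finite {v : k.Place // k.degPlace v = n})
    (P : ℝ)
    (hPNT : ∀ n : ℕ, 1 ≤ n →
      |(Nat.card {v : k.Place // k.degPlace v = n} : ℝ) - (k.q : ℝ) ^ n / n| ≤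
        P * (k.q : ℝ) ^ ((n : ℝ) / 2))
    (A B : ℝ) (hA : 0 < A) (hB : 0 < B) :
    ∃ D : ℝ, 0 < D ∧
      ∀ (K : ℕ) (β : ℝ) (c : ℤ → ℝ),
        1 ≤ K → 0 < β → β < 1 → 1 < (K : ℝ) * β →
        (∀ n : ℤ, c (-n) = c n) →
        (∀ n : ℤ, (K : ℤ) < |n| → c n = 0) →
        (∀ n : ℤ, |c n * n| ≤ A) →
        |(∑' n : ℕ, (n : ℝ) * (c n) ^ 2) - Real.log ((K : ℝ) * β) / (2 * Real.pi ^ 2)| ≤ B →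
        |(∑' v : k.Place, (c (k.degPlace v)) ^ 2 * (k.degPlace v : ℝ) ^ 2 / k.absNorm v) -
            Real.log ((K : ℝ) * β) / (2 * Real.pi ^ 2)| ≤ D :=
  statement14_general k hfin P hPNT A B hB
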